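/- arXiv:2004.01937 — 3 statements merged into one kernel-verified Lean document; each statement's English description precedes it below -/
import Mathlib

section
/- For the instance W = 132, w = (44, 33, 12), q = (2, 3, 6), the integer optimum z* = 3 and LP optimum z_LP = 259/132 satisfy z* − z_LP = 137/132 > 1; in particular the integer round-up property z* = ⌈z_LP⌉ fails since ⌈259/132⌉ = 2 < 3. -/
/-!
The LP bound comes from the dual prices `w / 132 = (1/3, 1/4, 1/11)`: every pattern has
weight at most 132, while the demand has weight `44·2 + 33·3 + 12·6 = 259`, so any fractional
solution uses at least `259/132` bars; the three homogeneous patterns `(3,0,0)`, `(0,4,0)`,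
`(0,0,11)` attain it. An integer solution is a multiset of patterns. One bar is too short
for weight 259, and two bars leave a slack of only 5 < 12, so they would have to cut exactly
`(2,3,6)` with each bar of weight at least 127; no pattern below `(2,3,6)` has such a weight.
Three bars `(2,0,3)`, `(0,3,0)`, `(0,0,3)` suffice.
-/

/-- A cutting pattern for master size 132 with sizes (44, 33, 12). -/
def ValidPattern (a : Fin 3 → ℕ) : Prop :=
  44 * a 0 + 33 * a 1 + 12 * a 2 ≤ 132

/-- LP feasibility for one-sided demands q = (2,3,6). -/
def LPFeasible (x : (Fin 3 → ℕ) →₀ ℝ) : Prop :=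
  (∀ a ∈ x.support, ValidPattern a) ∧
  (∀ a, 0 ≤ x a) ∧
  (2 : ℝ) ≤ x.sum (fun a c => c * (a 0 : ℝ)) ∧
  (3 : ℝ) ≤ x.sum (fun a c => c * (a 1 : ℝ)) ∧
  (6 : ℝ) ≤ x.sum (fun a c => c * (a 2 : ℝ))

/-- Integer feasibility for one-sided demands q = (2,3,6). -/
def IntFeasible (x : (Fin 3 → ℕ) →₀ ℕ) : Prop :=
  (∀ a ∈ x.support, ValidPattern a) ∧
  2 ≤ x.sum (fun a c => c * a 0) ∧
  3 ≤ x.sum (fun a c => c * a 1) ∧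
  6 ≤ x.sum (fun a c => c * a 2)

theorem Finsupp.sum_mul_le_mul_sum {ι R : Type*} [CommSemiring R] [PartialOrder R]
    [IsOrderedRing R] (x : ι →₀ R) (hx : ∀ a, 0 ≤ x a) (f : ι → R) (C : R)
    (hf : ∀ a ∈ x.support, f a ≤ C) :
    x.sum (fun a c => c * f a) ≤ C * x.sum (fun _ c => c) := by
  rw [Finsupp.mul_sum]
  exact Finset.sum_le_sum fun a ha => by
    simpa only [mul_comm C] using mul_le_mul_of_nonneg_left (hf a ha) (hx a)

theorem le_lpObjective_of_lpFeasible {x : (Fin 3 → ℕ) →₀ ℝ} (hx : LPFeasible x) :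
    259 / 132 ≤ x.sum fun _ c => c := by
  obtain ⟨hvalid, hnonneg, h0, h1, h2⟩ := hx
  have hweight : x.sum (fun a c => c * (44 * (a 0 : ℝ) + 33 * a 1 + 12 * a 2)) =
      44 * x.sum (fun a c => c * (a 0 : ℝ)) + 33 * x.sum (fun a c => c * (a 1 : ℝ)) +
        12 * x.sum (fun a c => c * (a 2 : ℝ)) := by
    simp only [Finsupp.sum, Finset.mul_sum, ← Finset.sum_add_distrib]
    exact Finset.sum_congr rfl fun a _ => by ring
  have hcapacity := x.sum_mul_le_mul_sum hnonneg
    (fun a => 44 * (a 0 : ℝ) + 33 * a 1 + 12 * a 2) 132 fun a ha => by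
      exact_mod_cast hvalid a ha
  linarith

theorem exists_lpFeasible_lpObjective_eq :
    ∃ x : (Fin 3 → ℕ) →₀ ℝ, LPFeasible x ∧ x.sum (fun _ c => c) = 259 / 132 := by
  refine ⟨Finsupp.single ![3, 0, 0] (2 / 3) + Finsupp.single ![0, 4, 0] (3 / 4)
      + Finsupp.single ![0, 0, 11] (6 / 11), ⟨?_, ?_, ?_⟩, ?_⟩
  · intro a ha
    simp only [Finsupp.mem_support_iff, Finsupp.coe_add, Pi.add_apply,
      Finsupp.single_apply] at ha
    split_ifs at ha <;> subst_vars <;> simp_all [ValidPattern]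
  · intro a
    simp only [Finsupp.add_apply, Finsupp.single_apply]
    positivity
  · simp [Finsupp.sum_add_index', Finsupp.sum_single_index, add_mul]
  · simp [Finsupp.sum_add_index', Finsupp.sum_single_index]
    norm_num

theorem isLeast_lpObjective :
    IsLeast {z : ℝ | ∃ x : (Fin 3 → ℕ) →₀ ℝ, LPFeasible x ∧ x.sum (fun _ c => c) = z}
      (259 / 132) :=
  ⟨exists_lpFeasible_lpObjective_eq, by
    rintro z ⟨x, hx, rfl⟩
    exact le_lpObjective_of_lpFeasible hx⟩

theorem intFeasible_iff (x : (Fin 3 → ℕ) →₀ ℕ) :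
    IntFeasible x ↔
      (∀ a ∈ x.toMultiset, ValidPattern a) ∧ ![2, 3, 6] ≤ x.toMultiset.sum := by
  simp only [IntFeasible, Finsupp.mem_toMultiset, Finsupp.sum_toMultiset, Pi.le_def,
    Fin.forall_fin_succ, Finsupp.sum, Finset.sum_apply, Pi.smul_apply, smul_eq_mul]
  simp

theorem not_le_add_of_validPattern {p p' : Fin 3 → ℕ} (hp : ValidPattern p)
    (hp' : ValidPattern p') : ¬ ![2, 3, 6] ≤ p + p' := by
  intro hq
  have h0 := hq 0
  have h1 := hq 1
  have h2 := hq 2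
  simp only [ValidPattern, Pi.add_apply] at *
  have : p 0 ≤ 3 := by omega
  have : p 1 ≤ 4 := by omega
  -- The rational relaxation is feasible (259 ≤ 264), so `omega` needs two coordinates fixed.
  interval_cases p 0 <;> interval_cases p 1 <;> simp at * <;> omega

theorem three_le_card_of_le_sum (s : Multiset (Fin 3 → ℕ)) (hs : ∀ a ∈ s, ValidPattern a)
    (hq : ![2, 3, 6] ≤ s.sum) : 3 ≤ Multiset.card s := by
  by_contra! hcard
  interval_cases hc : Multiset.card s
  · exact absurd (hq 0) (by simp [Multiset.card_eq_zero.mp hc])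
  · obtain ⟨p, rfl⟩ := Multiset.card_eq_one.mp hc
    refine not_le_add_of_validPattern (hs p (by simp)) (p' := 0) (by simp [ValidPattern]) ?_
    simpa using hq
  · obtain ⟨p, p', rfl⟩ := Multiset.card_eq_two.mp hc
    exact not_le_add_of_validPattern (hs p (by simp)) (hs p' (by simp)) (by simpa using hq)

theorem isLeast_intObjective :
    IsLeast {n : ℕ | ∃ x : (Fin 3 → ℕ) →₀ ℕ, IntFeasible x ∧ x.sum (fun _ c => c) = n} 3 := by
  refine ⟨⟨Multiset.toFinsupp {![2, 0, 3], ![0, 3, 0], ![0, 0, 3]}, ?_, ?_⟩, ?_⟩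
  · rw [intFeasible_iff, Multiset.toFinsupp_toMultiset]
    simp [ValidPattern]
  · simp [Finsupp.sum]
  · rintro n ⟨x, hx, rfl⟩
    rw [intFeasible_iff] at hx
    exact Finsupp.card_toMultiset x ▸ three_le_card_of_le_sum _ hx.1 hx.2

/-- for W = 132, w = (44,33,12), q = (2,3,6), the integer optimum z*
and LP optimum z_LP satisfy z* − z_LP = 137/132 > 1, and the integer round-up
property fails: z* ≠ ⌈z_LP⌉ = 2. -/
theorem stmt2 (zLP : ℝ) (zstar : ℕ)
    (hLP : IsLeast {z : ℝ | ∃ x : (Fin 3 → ℕ) →₀ ℝ, LPFeasible x ∧ x.sum (fun _ c => c) = z} zLP)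
    (hInt : IsLeast {n : ℕ | ∃ x : (Fin 3 → ℕ) →₀ ℕ, IntFeasible x ∧ x.sum (fun _ c => c) = n} zstar) :
    zstar = 3 ∧ zLP = 259 / 132 ∧
    (zstar : ℝ) - zLP = 137 / 132 ∧ (1 : ℝ) < 137 / 132 ∧
    ⌈zLP⌉ = 2 ∧ (zstar : ℤ) ≠ ⌈zLP⌉ := by
  obtain rfl : zstar = 3 := hInt.unique isLeast_intObjective
  obtain rfl : zLP = 259 / 132 := hLP.unique isLeast_lpObjective
  have hceil : ⌈(259 / 132 : ℝ)⌉ = 2 := by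
    rw [Int.ceil_eq_iff]
    norm_num
  refine ⟨rfl, rfl, by norm_num, by norm_num, hceil, ?_⟩
  rw [hceil]
  decide
end

section
/- There exists an equality-constrained cutting stock instance in which, in every waste-optimal solution, some order appears in at least 3 distinct patterns. In particular, any algorithm that assumes each order appears in at most 2 patterns of an optimal solution (such as the Haessler–Talbot set-partitioning approach) is incorrect, as it would declare such an instance infeasible. -/
/-- Feasibility for an equality-constrained instance with master size W, sizes w,
exact demands q: every used pattern fits in the master and each demand is met
exactly. -/
def Feasible (m W : ℕ) (w q : Fin m → ℕ) (x : (Fin m → ℕ) →₀ ℕ) : Prop :=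
  (∀ a ∈ x.support, ∑ j, a j * w j ≤ W) ∧
  (∀ j, x.sum (fun a c => c * a j) = q j)

/-- Total waste of a solution. -/
def waste (m W : ℕ) (w : Fin m → ℕ) (x : (Fin m → ℕ) →₀ ℕ) : ℕ :=
  x.sum (fun a c => c * (W - ∑ j, a j * w j))

noncomputable def pA : Fin 3 → ℕ := ![1,0,1]
noncomputable def pB : Fin 3 → ℕ := ![2,1,0]
noncomputable def pC : Fin 3 → ℕ := ![5,0,0]

noncomputable def ysol : (Fin 3 → ℕ) →₀ ℕ :=
  Finsupp.single pA 1 + Finsupp.single pB 1 + Finsupp.single pC 1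

lemma pAB : pA ≠ pB := by
  intro h; have := congrFun h 0; simp [pA, pB] at this
lemma pAC : pA ≠ pC := by
  intro h; have := congrFun h 0; simp [pA, pC] at this
lemma pBC : pB ≠ pC := by
  intro h; have := congrFun h 0; simp [pB, pC] at this

lemma ysol_sum (g : (Fin 3 → ℕ) → ℕ) :
    ysol.sum (fun a c => c * g a) = g pA + g pB + g pC := by
  rw [ysol]
  rw [Finsupp.sum_add_index' (by intro a; simp) (by intro a b1 b2; ring)]
  rw [Finsupp.sum_add_index' (by intro a; simp) (by intro a b1 b2; ring)]
  rw [Finsupp.sum_single_index (by simp), Finsupp.sum_single_index (by simp),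
    Finsupp.sum_single_index (by simp)]
  ring

lemma solve3 (n0 n1 n2 : ℕ) (hfull : n0 + n1 * 3 + n2 * 4 = 5) :
    (n0 = 1 ∧ n1 = 0 ∧ n2 = 1) ∨ (n0 = 2 ∧ n1 = 1 ∧ n2 = 0)
        ∨ (n0 = 5 ∧ n1 = 0 ∧ n2 = 0) := by
  have h1 : n1 ≤ 1 := by omega
  have h2 : n2 ≤ 1 := by omega
  interval_cases n1 <;> interval_cases n2 <;> omega

lemma ysol_feas : Feasible 3 5 ![1,3,4] ![8,1,1] ysol := by
  constructor
  · intro a ha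
    have hs : ysol.support ⊆ {pA, pB, pC} := by
      rw [ysol]
      refine (Finsupp.support_add).trans ?_
      intro b hb
      simp only [Finset.mem_union] at hb
      rcases hb with hb | hb
      · have := Finsupp.support_add hb
        simp only [Finset.mem_union] at this
        rcases this with h | h
        · have := Finsupp.support_single_subset h; simp at this; simp [this]
        · have := Finsupp.support_single_subset h; simp at this; simp [this]
      · have := Finsupp.support_single_subset hb; simp at this; simp [this]
    have := hs ha
    simp only [Finset.mem_insert, Finset.mem_singleton] at this
    rcases this with h | h | h <;> subst h <;>
      simp [Fin.sum_univ_three, pA, pB, pC]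
  · intro j
    rw [ysol_sum (fun a => a j)]
    fin_cases j <;> simp [pA, pB, pC]

lemma ysol_waste : waste 3 5 ![1,3,4] ysol = 0 := by
  rw [waste, ysol_sum (fun a => 5 - ∑ j, a j * ![1,3,4] j)]
  simp [Fin.sum_univ_three, pA, pB, pC]


/-- there is an equality-constrained instance such that in every
waste-optimal solution some order appears in at least 3 distinct patterns. -/
theorem stmt7 :
    ∃ (m W : ℕ) (w q : Fin m → ℕ),
      (∃ x, Feasible m W w q x) ∧
      ∀ x, Feasible m W w q x →
        (∀ y, Feasible m W w q y → waste m W w x ≤ waste m W w y) →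
        ∃ j : Fin m, 3 ≤ (x.support.filter (fun a => 0 < a j)).card := by
  refine ⟨3, 5, ![1,3,4], ![8,1,1], ⟨ysol, ysol_feas⟩, ?_⟩
  intro x hx hopt
  have hw0 : waste 3 5 ![1,3,4] x = 0 := by
    have := hopt ysol ysol_feas
    rw [ysol_waste] at this
    omega
  -- every support pattern is full
  have hfull : ∀ a ∈ x.support, ∑ j, a j * ![1,3,4] j = 5 := by
    intro a ha
    have hle := hx.1 a ha
    simp only [waste, Finsupp.sum] at hw0
    have := Finset.sum_eq_zero_iff.mp hw0 a ha
    have hxa : x a ≠ 0 := Finsupp.mem_support_iff.mp ha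
    have hz : 5 - ∑ j, a j * ![1,3,4] j = 0 := by
      rcases Nat.mul_eq_zero.mp this with h | h
      · exact absurd h hxa
      · exact h
    exact le_antisymm hle (Nat.sub_eq_zero_iff_le.mp hz)
  -- so support ⊆ {pA, pB, pC}
  have hsub : x.support ⊆ {pA, pB, pC} := by
    intro a ha
    have h5 := hfull a ha
    rw [Fin.sum_univ_three] at h5
    norm_num at h5
    have hcase := solve3 (a 0) (a 1) (a 2) h5
    have haeq : ∀ p : Fin 3 → ℕ, a 0 = p 0 → a 1 = p 1 → a 2 = p 2 → a = p := by
      intro p h1 h2 h3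
      funext j
      fin_cases j <;> assumption
    simp only [Finset.mem_insert, Finset.mem_singleton]
    rcases hcase with ⟨e0, e1, e2⟩ | ⟨e0, e1, e2⟩ | ⟨e0, e1, e2⟩
    · exact Or.inl (haeq pA (by simp [pA, e0]) (by simp [pA, e1]) (by simp [pA, e2]))
    · exact Or.inr (Or.inl (haeq pB (by simp [pB, e0]) (by simp [pB, e1]) (by simp [pB, e2])))
    · exact Or.inr (Or.inr (haeq pC (by simp [pC, e0]) (by simp [pC, e1]) (by simp [pC, e2])))
  -- demand equations
  have hsum : ∀ j : Fin 3, x pA * pA j + x pB * pB j + x pC * pC j = ![8,1,1] j := by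
    intro j
    have := hx.2 j
    rw [Finsupp.sum] at this
    rw [← this]
    rw [Finset.sum_subset hsub (by intro b _ hb; simp [Finsupp.notMem_support_iff.mp hb])]
    rw [Finset.sum_insert (by simp [pAB, pAC]), Finset.sum_insert (by simp [pBC]),
      Finset.sum_singleton]
    ring
  have e0 := hsum 0
  have e1 := hsum 1
  have e2 := hsum 2
  simp only [pA, pB, pC, Matrix.cons_val_zero, Matrix.cons_val_one, Matrix.head_cons,
    Matrix.cons_val_two, Matrix.tail_cons] at e0 e1 e2
  have hA : x ![1,0,1] = 1 := by omega
  have hB : x ![2,1,0] = 1 := by omega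
  have hC : x ![5,0,0] = 1 := by omega
  refine ⟨0, ?_⟩
  have hmem : ({pA, pB, pC} : Finset (Fin 3 → ℕ)) ⊆
      x.support.filter (fun a => 0 < a 0) := by
    intro b hb
    simp only [Finset.mem_insert, Finset.mem_singleton] at hb
    rcases hb with h | h | h <;> subst h <;>
      simp [Finset.mem_filter, Finsupp.mem_support_iff, hA, hB, hC, pA, pB, pC]
  have hcard : ({pA, pB, pC} : Finset (Fin 3 → ℕ)).card = 3 := by
    rw [Finset.card_insert_of_notMem (by simp [pAB, pAC]),
      Finset.card_insert_of_notMem (by simp [pBC]), Finset.card_singleton]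
  calc 3 = ({pA, pB, pC} : Finset (Fin 3 → ℕ)).card := hcard.symm
    _ ≤ _ := Finset.card_le_card hmem
end

section
/- Consider the one-sided LP relaxation min ∑ x_a subject to ∑_a a_j x_a ≥ q_j, x_a ≥ 0 over all patterns. If there are exactly two orders (m = 2), then the integer round-up property holds: the integer optimum equals ⌈z_LP⌉. -/
/-!
Divide an LP solution of value z by z: the resulting probability distribution on patterns has
mean at least (q₁, q₂) / z. In the plane, the mean of finitely many points is dominated by a
convex combination θ a + (1 - θ) b of just two of them. With n = ⌈z⌉ bins, fill k ≈ θ n bins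
with a and n - 1 - k with b; what is still uncovered is an integer point dominated by a convex
combination of a and b, and since the knapsack constraint is linear it is a pattern itself,
which fills the last bin.
-/

theorem exists_pair_dominating_average {ι : Type*} (s : Finset ι) (c x y : ι → ℝ)
    (hc : ∀ i ∈ s, 0 ≤ c i) (hc₁ : ∑ i ∈ s, c i = 1) :
    ∃ a ∈ s, ∃ b ∈ s, ∃ θ : ℝ, 0 ≤ θ ∧ θ ≤ 1 ∧
      ∑ i ∈ s, c i * x i ≤ θ * x a + (1 - θ) * x b ∧
      ∑ i ∈ s, c i * y i ≤ θ * y a + (1 - θ) * y b := by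
  set X := ∑ i ∈ s, c i * x i
  set Y := ∑ i ∈ s, c i * y i
  -- Otherwise some line through (X, Y) passes strictly above every point (x i, y i),
  -- which is absurd for their weighted average.
  by_contra! H
  have hcross : ∀ i ∈ s, ∀ j ∈ s, x i < X → X < x j →
      (y j - Y) / (x j - X) < (Y - y i) / (X - x i) := by
    intro i hi j hj hiX hXj
    have hD : 0 < x j - x i := by linarith
    set θ := (X - x i) / (x j - x i)
    have hθD : θ * (x j - x i) = X - x i := div_mul_cancel₀ _ hD.ne'
    have key := H j hj i hi θ (div_nonneg (by linarith) hD.le)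
      ((div_le_one hD).2 (by linarith)) (by linarith [hθD])
    rw [div_lt_div_iff₀ (by linarith) (by linarith)]
    linear_combination mul_lt_mul_of_pos_right key hD - (y j - y i) * hθD
  have hmid : ∀ i ∈ s, x i = X → y i < Y := fun i hi hiX =>
    by simpa using H i hi i hi 1 zero_le_one le_rfl (by simp [hiX])
  obtain ⟨l, hlR, hlL⟩ := Finset.exists_between'
    ((s.filter (X < x ·)).image fun j => (y j - Y) / (x j - X))
    ((s.filter (x · < X)).image fun i => (Y - y i) / (X - x i)) (by
      simp only [Finset.forall_mem_image, Finset.mem_filter]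
      exact fun j ⟨hj, hXj⟩ i ⟨hi, hiX⟩ => hcross i hi j hj hiX hXj)
  simp only [Finset.forall_mem_image, Finset.mem_filter] at hlR hlL
  have hsep : ∀ i ∈ s, y i - Y < l * (x i - X) := by
    intro i hi
    rcases lt_trichotomy (x i) X with h | h | h
    · have := hlL ⟨hi, h⟩
      rw [lt_div_iff₀ (by linarith)] at this
      linarith
    · rw [h, sub_self, mul_zero, sub_neg]; exact hmid i hi h
    · have := hlR ⟨hi, h⟩
      rwa [div_lt_iff₀ (by linarith)] at this
  obtain ⟨i₀, hi₀, hci₀⟩ : ∃ i ∈ s, 0 < c i :=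
    Finset.exists_lt_of_sum_lt (by simp [hc₁] : ∑ i ∈ s, (0 : ℝ) < ∑ i ∈ s, c i)
  have hlt : ∑ i ∈ s, c i * (y i - Y) < ∑ i ∈ s, c i * (l * (x i - X)) :=
    Finset.sum_lt_sum (fun i hi => mul_le_mul_of_nonneg_left (hsep i hi).le (hc i hi))
      ⟨i₀, hi₀, mul_lt_mul_of_pos_left (hsep i₀ hi₀) hci₀⟩
  have hY : ∑ i ∈ s, c i * (y i - Y) = 0 := by
    simp only [mul_sub, Finset.sum_sub_distrib, ← Finset.sum_mul, hc₁]; ring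
  have hX : ∑ i ∈ s, c i * (l * (x i - X)) = 0 := by
    simp only [mul_left_comm (c _) l, ← Finset.mul_sum, mul_sub, Finset.sum_sub_distrib,
      ← Finset.sum_mul, hc₁]; ring
  linarith

theorem exists_nat_split {θ : ℝ} (hθ₀ : 0 ≤ θ) (hθ₁ : θ ≤ 1) {n : ℕ} (hn : 1 ≤ n) :
    ∃ k j : ℕ, k + j + 1 = n ∧ ∃ s : ℝ, 0 ≤ s ∧ s ≤ 1 ∧ θ * n = k + s := by
  have hθn : 0 ≤ θ * n := by positivity
  refine ⟨min ⌊θ * n⌋₊ (n - 1), n - 1 - min ⌊θ * n⌋₊ (n - 1), by omega,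
    θ * n - min ⌊θ * n⌋₊ (n - 1), ?_, ?_, by ring⟩
  · have := Nat.floor_le hθn
    have : ((min ⌊θ * n⌋₊ (n - 1) : ℕ) : ℝ) ≤ ⌊θ * n⌋₊ := by exact_mod_cast min_le_left _ _
    linarith
  · rcases le_total ⌊θ * n⌋₊ (n - 1) with h | h
    · rw [min_eq_left h]; linarith [Nat.lt_floor_add_one (θ * n)]
    · rw [min_eq_right h, Nat.cast_sub hn, Nat.cast_one]
      nlinarith [(Nat.cast_nonneg n : (0 : ℝ) ≤ n)]

theorem natCast_sub_le_convexComb {q k j n u v : ℕ} {θ s : ℝ} (hs₀ : 0 ≤ s) (hs₁ : s ≤ 1)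
    (hkj : k + j + 1 = n) (hs : θ * n = k + s) (hq : (q : ℝ) ≤ n * (θ * u + (1 - θ) * v)) :
    ((q - (k * u + j * v) : ℕ) : ℝ) ≤ s * u + (1 - s) * v := by
  have hn : (n : ℝ) = k + j + 1 := by rw [← hkj]; push_cast; ring
  rcases le_total q (k * u + j * v) with h | h
  · rw [Nat.sub_eq_zero_of_le h, Nat.cast_zero]; positivity
  · rw [Nat.cast_sub h]; push_cast
    linear_combination hq + (u - v : ℝ) * hs + (v : ℝ) * hn

theorem Finsupp.sum_single_add_single_add_single {α : Type*} (a b r : α) (k j : ℕ) (f : α → ℕ) :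
    (Finsupp.single a k + Finsupp.single b j + Finsupp.single r 1).sum (fun c m => m * f c) =
      k * f a + j * f b + f r := by
  simp [Finsupp.sum_add_index', add_mul]

def IsPattern (W w₁ w₂ : ℕ) (a : Fin 2 → ℕ) : Prop := a 0 * w₁ + a 1 * w₂ ≤ W

def lpValues (W w₁ w₂ q₁ q₂ : ℕ) : Set ℝ :=
  {z | ∃ x : (Fin 2 → ℕ) →₀ ℝ,
    (∀ a ∈ x.support, IsPattern W w₁ w₂ a) ∧
    (∀ a, 0 ≤ x a) ∧
    (q₁ : ℝ) ≤ x.sum (fun a c => c * (a 0 : ℝ)) ∧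
    (q₂ : ℝ) ≤ x.sum (fun a c => c * (a 1 : ℝ)) ∧
    x.sum (fun _ c => c) = z}

def ipValues (W w₁ w₂ q₁ q₂ : ℕ) : Set ℕ :=
  {n | ∃ x : (Fin 2 → ℕ) →₀ ℕ,
    (∀ a ∈ x.support, IsPattern W w₁ w₂ a) ∧
    q₁ ≤ x.sum (fun a c => c * a 0) ∧
    q₂ ≤ x.sum (fun a c => c * a 1) ∧
    x.sum (fun _ c => c) = n}

section

variable {W w₁ w₂ q₁ q₂ : ℕ}

theorem IsPattern.of_le_convexComb {a b c : Fin 2 → ℕ} (ha : IsPattern W w₁ w₂ a)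
    (hb : IsPattern W w₁ w₂ b) {s : ℝ} (hs₀ : 0 ≤ s) (hs₁ : s ≤ 1)
    (hc : ∀ i, (c i : ℝ) ≤ s * a i + (1 - s) * b i) : IsPattern W w₁ w₂ c := by
  have ha' : (a 0 * w₁ + a 1 * w₂ : ℝ) ≤ W := by exact_mod_cast ha
  have hb' : (b 0 * w₁ + b 1 * w₂ : ℝ) ≤ W := by exact_mod_cast hb
  have : (c 0 * w₁ + c 1 * w₂ : ℝ) ≤ W :=
    calc (c 0 * w₁ + c 1 * w₂ : ℝ)
        ≤ (s * a 0 + (1 - s) * b 0) * w₁ + (s * a 1 + (1 - s) * b 1) * w₂ := by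
          gcongr <;> exact hc _
      _ = s * (a 0 * w₁ + a 1 * w₂) + (1 - s) * (b 0 * w₁ + b 1 * w₂) := by ring
      _ ≤ s * W + (1 - s) * W := by gcongr
      _ = W := by ring
  exact_mod_cast this

theorem mem_ipValues_of_two_patterns {a b : Fin 2 → ℕ} (ha : IsPattern W w₁ w₂ a)
    (hb : IsPattern W w₁ w₂ b) {θ : ℝ} (hθ₀ : 0 ≤ θ) (hθ₁ : θ ≤ 1) {n : ℕ} (hn : 1 ≤ n)
    (h₁ : (q₁ : ℝ) ≤ n * (θ * a 0 + (1 - θ) * b 0))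
    (h₂ : (q₂ : ℝ) ≤ n * (θ * a 1 + (1 - θ) * b 1)) :
    n ∈ ipValues W w₁ w₂ q₁ q₂ := by
  obtain ⟨k, j, hkj, s, hs₀, hs₁, hs⟩ := exists_nat_split hθ₀ hθ₁ hn
  set r : Fin 2 → ℕ := ![q₁ - (k * a 0 + j * b 0), q₂ - (k * a 1 + j * b 1)]
  have hr : IsPattern W w₁ w₂ r := ha.of_le_convexComb hb hs₀ hs₁ <| Fin.forall_fin_two.2
    ⟨natCast_sub_le_convexComb hs₀ hs₁ hkj hs h₁, natCast_sub_le_convexComb hs₀ hs₁ hkj hs h₂⟩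
  refine ⟨Finsupp.single a k + Finsupp.single b j + Finsupp.single r 1, ?_, ?_, ?_, ?_⟩
  · intro c hc
    rcases Finset.mem_union.1 (Finsupp.support_add hc) with h | h
    · rcases Finset.mem_union.1 (Finsupp.support_add h) with h | h
      · rwa [Finset.mem_singleton.1 (Finsupp.support_single_subset h)]
      · rwa [Finset.mem_singleton.1 (Finsupp.support_single_subset h)]
    · rwa [Finset.mem_singleton.1 (Finsupp.support_single_subset h)]
  · rw [Finsupp.sum_single_add_single_add_single]; simp [r]; omega
  · rw [Finsupp.sum_single_add_single_add_single]; simp [r]; omega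
  · simp [Finsupp.sum_add_index']; omega

theorem natCast_mem_lpValues {n : ℕ} (hn : n ∈ ipValues W w₁ w₂ q₁ q₂) :
    (n : ℝ) ∈ lpValues W w₁ w₂ q₁ q₂ := by
  obtain ⟨x, hpat, h₁, h₂, rfl⟩ := hn
  refine ⟨x.mapRange Nat.cast Nat.cast_zero, fun a ha => hpat a (Finsupp.support_mapRange ha),
    fun a => by simp, ?_, ?_, ?_⟩
  · simpa [Finsupp.sum_mapRange_index, Nat.cast_finsupp_sum] using (Nat.cast_le (α := ℝ)).2 h₁
  · simpa [Finsupp.sum_mapRange_index, Nat.cast_finsupp_sum] using (Nat.cast_le (α := ℝ)).2 h₂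
  · simp [Finsupp.sum_mapRange_index, Nat.cast_finsupp_sum]

theorem pos_of_mem_lpValues (hq₁ : 0 < q₁) {z : ℝ} (hz : z ∈ lpValues W w₁ w₂ q₁ q₂) :
    0 < z := by
  obtain ⟨x, -, hnn, h₁, -, rfl⟩ := hz
  refine lt_of_le_of_ne (Finset.sum_nonneg fun a _ => hnn a) fun h => ?_
  have hx := (Finset.sum_eq_zero_iff_of_nonneg fun a _ => hnn a).1 h.symm
  have h₁' : (q₁ : ℝ) ≤ 0 :=
    h₁.trans (Finset.sum_eq_zero fun a ha => by simp [hx a ha]).le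
  linarith [(Nat.cast_pos.2 hq₁ : (0 : ℝ) < q₁)]

theorem natCeil_mem_ipValues (hq₁ : 0 < q₁) {z : ℝ} (hz : z ∈ lpValues W w₁ w₂ q₁ q₂) :
    ⌈z⌉₊ ∈ ipValues W w₁ w₂ q₁ q₂ := by
  have hz₀ := pos_of_mem_lpValues hq₁ hz
  obtain ⟨x, hpat, hnn, h₁, h₂, rfl⟩ := hz
  simp only [Finsupp.sum] at h₁ h₂ hz₀ ⊢
  set z := ∑ a ∈ x.support, x a
  obtain ⟨a, ha, b, hb, θ, hθ₀, hθ₁, ha', hb'⟩ := exists_pair_dominating_average x.support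
    (fun a => x a / z) (fun a => (a 0 : ℝ)) (fun a => (a 1 : ℝ))
    (fun a _ => div_nonneg (hnn a) hz₀.le) (by rw [← Finset.sum_div, div_self hz₀.ne'])
  have hscale : ∀ {q : ℕ} {f : (Fin 2 → ℕ) → ℝ} {t : ℝ}, 0 ≤ t →
      (q : ℝ) ≤ ∑ a ∈ x.support, x a * f a → ∑ a ∈ x.support, x a / z * f a ≤ t →
      (q : ℝ) ≤ ⌈z⌉₊ * t := fun {q f t} ht hq hft =>
    calc (q : ℝ) ≤ ∑ a ∈ x.support, x a * f a := hq
      _ = z * ∑ a ∈ x.support, x a / z * f a := by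
        rw [Finset.mul_sum]; congr! 1 with a; field_simp
      _ ≤ z * t := by gcongr
      _ ≤ ⌈z⌉₊ * t := by gcongr; exact Nat.le_ceil z
  have hconv : ∀ u v : ℕ, 0 ≤ θ * u + (1 - θ) * v := fun u v =>
    add_nonneg (by positivity) (mul_nonneg (by linarith) (by positivity))
  exact mem_ipValues_of_two_patterns (hpat a ha) (hpat b hb) hθ₀ hθ₁ (Nat.ceil_pos.2 hz₀)
    (hscale (hconv _ _) h₁ ha') (hscale (hconv _ _) h₂ hb')

end

theorem stmt15_general (W w₁ w₂ q₁ q₂ : ℕ)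
    (hq₁ : 0 < q₁)
    (zLP : ℝ) (zstar : ℕ)
    (hLP : IsLeast {z : ℝ | ∃ x : (Fin 2 → ℕ) →₀ ℝ,
      (∀ a ∈ x.support, a 0 * w₁ + a 1 * w₂ ≤ W) ∧
      (∀ a, 0 ≤ x a) ∧
      (q₁ : ℝ) ≤ x.sum (fun a c => c * (a 0 : ℝ)) ∧
      (q₂ : ℝ) ≤ x.sum (fun a c => c * (a 1 : ℝ)) ∧
      x.sum (fun _ c => c) = z} zLP)
    (hInt : IsLeast {n : ℕ | ∃ x : (Fin 2 → ℕ) →₀ ℕ,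
      (∀ a ∈ x.support, a 0 * w₁ + a 1 * w₂ ≤ W) ∧
      q₁ ≤ x.sum (fun a c => c * a 0) ∧
      q₂ ≤ x.sum (fun a c => c * a 1) ∧
      x.sum (fun _ c => c) = n} zstar) :
    (zstar : ℤ) = ⌈zLP⌉ := by
  have hle : zstar ≤ ⌈zLP⌉₊ := hInt.2 (natCeil_mem_ipValues hq₁ hLP.1)
  have hge : ⌈zLP⌉₊ ≤ zstar := Nat.ceil_le.2 (hLP.2 (natCast_mem_lpValues hInt.1))
  rw [← Int.natCast_ceil_eq_ceil (pos_of_mem_lpValues hq₁ hLP.1).le, le_antisymm hle hge]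

/-- Marcotte's two-order theorem: for a one-sided instance with two
orders (sizes w₁, w₂ ≤ W positive, positive demands q₁, q₂), the integer round-up
property holds: the integer optimum of the master-item minimisation problem equals
⌈z_LP⌉, where z_LP is the LP relaxation optimum. -/
theorem stmt15 (W w₁ w₂ q₁ q₂ : ℕ)
    (hw₁ : 0 < w₁) (hw₂ : 0 < w₂) (hW₁ : w₁ ≤ W) (hW₂ : w₂ ≤ W)
    (hq₁ : 0 < q₁) (hq₂ : 0 < q₂)
    (zLP : ℝ) (zstar : ℕ)
    (hLP : IsLeast {z : ℝ | ∃ x : (Fin 2 → ℕ) →₀ ℝ,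
      (∀ a ∈ x.support, a 0 * w₁ + a 1 * w₂ ≤ W) ∧
      (∀ a, 0 ≤ x a) ∧
      (q₁ : ℝ) ≤ x.sum (fun a c => c * (a 0 : ℝ)) ∧
      (q₂ : ℝ) ≤ x.sum (fun a c => c * (a 1 : ℝ)) ∧
      x.sum (fun _ c => c) = z} zLP)
    (hInt : IsLeast {n : ℕ | ∃ x : (Fin 2 → ℕ) →₀ ℕ,
      (∀ a ∈ x.support, a 0 * w₁ + a 1 * w₂ ≤ W) ∧
      q₁ ≤ x.sum (fun a c => c * a 0) ∧
      q₂ ≤ x.sum (fun a c => c * a 1) ∧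
      x.sum (fun _ c => c) = n} zstar) :
    (zstar : ℤ) = ⌈zLP⌉ :=
  stmt15_general W w₁ w₂ q₁ q₂ hq₁ zLP zstar hLP hInt
end
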